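/- arXiv:1704.04831 — 3 statements merged into one kernel-verified Lean document; each statement's English description precedes it below -/
import Mathlib

section
/- Let q ≥ 1 and D ≥ 1, and let n be an integer with gcd(n, q) = 1. Then the sum over all Dirichlet characters χ mod q whose conductor is at most D of χ(n) equals the sum over s ≤ D with s | q, over d | s, of μ(s/d)·φ(d)·𝟙[d | n−1]. -/
open Finset DirichletCharacter

/-!
Sorting the characters mod `q` by conductor, and lifting each primitive character mod `s ∣ q` to
level `q` by `changeLevel`, identifies the characters of conductor `s` with the primitive
characters mod `s`, at the same values on `n` coprime to `q`. So the left side is the sum, over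
`s ∣ q` with `s ≤ D`, of the primitive sums `P(s) = ∑_{ψ primitive mod s} ψ(n)`. The same
decomposition applied to all characters mod `m` and orthogonality give
`∑_{s ∣ m} P(s) = φ(m) 𝟙[m ∣ n - 1]` for every `m` coprime to `n`, and Möbius inversion on
this divisor-closed set of `m` computes `P(s)`.
-/

noncomputable def primitiveCharSum (s n : ℕ) : ℂ :=
  ∑ ψ ∈ univ.filter (fun ψ : DirichletCharacter ℂ s => ψ.conductor = s), ψ n

theorem sum_conductor_eq_eq_primitiveCharSum {q s n : ℕ} [NeZero q] (hs : s ∣ q)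
    (hn : n.Coprime q) :
    ∑ χ ∈ univ.filter (fun χ : DirichletCharacter ℂ q => χ.conductor = s), χ n =
      primitiveCharSum s n := by
  refine (sum_bij (fun ψ _ => changeLevel hs ψ) ?_
    (fun _ _ _ _ h => changeLevel_injective hs h) ?_ ?_).symm
  · intro ψ hψ
    simpa [conductor_changeLevel] using hψ
  · intro χ hχ
    obtain ⟨_, ψ, hψ⟩ : χ.FactorsThrough s :=
      (mem_filter.mp hχ).2 ▸ χ.factorsThrough_conductor
    refine ⟨ψ, ?_, hψ.symm⟩
    simpa [hψ, conductor_changeLevel] using hχ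
  · intro ψ _
    have := changeLevel_eq_cast_of_dvd' ψ hs (Nat.isCoprime_iff_coprime.mpr hn)
    simpa using this.symm

theorem sum_eq_sum_divisors_primitiveCharSum {q n : ℕ} [NeZero q] (hn : n.Coprime q) :
    ∑ χ : DirichletCharacter ℂ q, χ n = ∑ s ∈ q.divisors, primitiveCharSum s n := by
  rw [← sum_fiberwise_of_maps_to (g := conductor) (t := q.divisors)
    fun χ _ => Nat.mem_divisors.mpr ⟨χ.conductor_dvd_level, NeZero.ne q⟩]
  exact sum_congr rfl fun s hs =>
    sum_conductor_eq_eq_primitiveCharSum (Nat.dvd_of_mem_divisors hs) hn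

theorem natCast_eq_one_iff_dvd_sub_one {q n : ℕ} (hn : n.Coprime q) :
    (n : ZMod q) = 1 ↔ q ∣ n - 1 := by
  -- `0 - 1 = 0` in `ℕ`, so `n = 0` is only harmless because coprimality then forces `q = 1`.
  rcases n with _ | n
  · obtain rfl := (Nat.coprime_zero_left q).mp hn
    exact iff_of_true (Subsingleton.elim _ _) (one_dvd _)
  · simp [ZMod.natCast_eq_zero_iff]

theorem sum_characters_natCast {q n : ℕ} [NeZero q] (hn : n.Coprime q) :
    ∑ χ : DirichletCharacter ℂ q, χ n = (q.totient : ℂ) * if q ∣ n - 1 then 1 else 0 := by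
  simp [sum_characters_eq, natCast_eq_one_iff_dvd_sub_one hn]

theorem primitiveCharSum_eq_sum_divisors {s n : ℕ} (hs : s ≠ 0) (hn : n.Coprime s) :
    primitiveCharSum s n = ∑ d ∈ s.divisors,
      (ArithmeticFunction.moebius (s / d) : ℂ) * d.totient * if d ∣ n - 1 then 1 else 0 := by
  have inversion := (ArithmeticFunction.sum_eq_iff_sum_mul_moebius_eq_on {m | n.Coprime m}
    (fun _ _ hab hb => Nat.Coprime.coprime_dvd_right hab hb)).mp
    (fun m hm hnm => by
      have : NeZero m := ⟨hm.ne'⟩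
      rw [← sum_eq_sum_divisors_primitiveCharSum hnm, sum_characters_natCast hnm])
    s (Nat.pos_of_ne_zero hs) hn
  rw [← inversion, Nat.sum_divisorsAntidiagonal' (f := fun a b =>
    (ArithmeticFunction.moebius a : ℂ) * (b.totient * if b ∣ n - 1 then 1 else 0))]
  simp only [mul_assoc]

theorem stmt_0_general (q D n : ℕ) (hq : 1 ≤ q)
    (hcop : Nat.Coprime n q) :
    ∑ χ ∈ Finset.univ.filter (fun χ : DirichletCharacter ℂ q => χ.conductor ≤ D),
        χ (n : ZMod q)
      = ∑ s ∈ q.divisors.filter (· ≤ D), ∑ d ∈ s.divisors,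
          (ArithmeticFunction.moebius (s / d) : ℂ) * (Nat.totient d : ℂ) *
            (if d ∣ n - 1 then 1 else 0) := by
  have : NeZero q := ⟨by omega⟩
  rw [← sum_fiberwise_of_maps_to (g := conductor) (t := q.divisors.filter (· ≤ D))
    fun χ hχ => mem_filter.mpr
      ⟨Nat.mem_divisors.mpr ⟨χ.conductor_dvd_level, NeZero.ne q⟩, (mem_filter.mp hχ).2⟩]
  refine sum_congr rfl fun s hs => ?_
  obtain ⟨hsq, hsD⟩ := mem_filter.mp hs
  have fiber : {χ ∈ univ.filter (fun χ : DirichletCharacter ℂ q => χ.conductor ≤ D) |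
      χ.conductor = s} = univ.filter (fun χ : DirichletCharacter ℂ q => χ.conductor = s) := by
    rw [filter_filter]
    exact filter_congr fun χ _ => and_iff_right_of_imp fun h => h ▸ hsD
  rw [fiber, sum_conductor_eq_eq_primitiveCharSum (Nat.dvd_of_mem_divisors hsq) hcop,
    primitiveCharSum_eq_sum_divisors (Nat.pos_of_mem_divisors hsq).ne'
      (hcop.coprime_dvd_right (Nat.dvd_of_mem_divisors hsq))]

/-- For `q, D ≥ 1` and `n` coprime to `q`, the sum over all Dirichlet
characters mod `q` of conductor at most `D` of `χ(n)` equals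
`∑_{s ≤ D, s ∣ q} ∑_{d ∣ s} μ(s/d) φ(d) 𝟙[d ∣ n−1]`. -/
theorem stmt_0 (q D n : ℕ) (hq : 1 ≤ q) (hD : 1 ≤ D) (hn : 1 ≤ n)
    (hcop : Nat.Coprime n q) :
    ∑ χ ∈ Finset.univ.filter (fun χ : DirichletCharacter ℂ q => χ.conductor ≤ D),
        χ (n : ZMod q)
      = ∑ s ∈ q.divisors.filter (· ≤ D), ∑ d ∈ s.divisors,
          (ArithmeticFunction.moebius (s / d) : ℂ) * (Nat.totient d : ℂ) *
            (if d ∣ n - 1 then 1 else 0) :=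
  stmt_0_general q D n hq hcop
end

section
/- Let f be a multiplicative function with |f(n)| ≤ 1 for all n, and let g be the multiplicative function defined by the Dirichlet convolution f * g = 𝟙[n=1] (the convolution inverse of f). For q ≥ 1, m | q, a coprime to m, and x ≥ 1, we have ∑_{n ≤ x, n ≡ a mod m, gcd(n,q)=1} f(n) = ∑_{ℓ ≥ 1: p|ℓ ⇒ p|q, gcd(ℓ,m)=1} g(ℓ) ∑_{n ≤ x/ℓ, n ≡ a ℓ^{-1} mod m} f(n). -/
open scoped Classical

lemma aux_dvd_pow (N ℓ q : ℕ) (hN : 1 ≤ N) (hq : 1 ≤ q) (hl : ℓ ∣ N)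
    (hP : ∀ p : ℕ, p.Prime → p ∣ ℓ → p ∣ q) : ℓ ∣ q ^ N := by
  have hℓ0 : ℓ ≠ 0 := by
    rintro rfl; simp at hl; omega
  have hqN0 : q ^ N ≠ 0 := by positivity
  rw [← Nat.factorization_le_iff_dvd hℓ0 hqN0]
  intro p
  rcases Nat.eq_zero_or_pos (ℓ.factorization p) with h0 | hpos
  · simp [h0]
  · have hmem : p ∈ ℓ.factorization.support := Finsupp.mem_support_iff.mpr (by omega)
    rw [Nat.support_factorization] at hmem
    have hp := Nat.prime_of_mem_primeFactors hmem
    have hpl := Nat.dvd_of_mem_primeFactors hmem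
    have hq1 : 1 ≤ q.factorization p :=
      hp.factorization_pos_of_dvd (by omega) (hP p hp hpl)
    have h2 : ℓ.factorization p < ℓ := Nat.factorization_lt p hℓ0
    have h3 : ℓ ≤ N := Nat.le_of_dvd (by omega) hl
    have h4 : (q ^ N).factorization p = N * q.factorization p := by
      rw [Nat.factorization_pow]; simp
    calc ℓ.factorization p ≤ N := by omega
      _ ≤ N * q.factorization p := Nat.le_mul_of_pos_right N (by omega)
      _ = (q ^ N).factorization p := h4.symm

/-- Flipped convolution identity. -/
lemma aux_flip (f g : ℕ → ℂ)
    (hg : ∀ n : ℕ, 1 ≤ n → ∑ d ∈ n.divisors, f d * g (n / d) = if n = 1 then 1 else 0)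
    (n : ℕ) (hn : 1 ≤ n) :
    ∑ d ∈ n.divisors, g d * f (n / d) = if n = 1 then 1 else 0 := by
  rw [← Nat.sum_divisorsAntidiagonal' (fun i j => g j * f i),
    Nat.sum_divisorsAntidiagonal (fun i j => g j * f i), ← hg n hn]
  exact Finset.sum_congr rfl fun d _ => mul_comm _ _

/-- Key lemma: restricted divisor-sum identity. -/
lemma aux_key (f g : ℕ → ℂ)
    (hf_mult : ∀ a b : ℕ, Nat.Coprime a b → f (a * b) = f a * f b)
    (hg : ∀ n : ℕ, 1 ≤ n → ∑ d ∈ n.divisors, f d * g (n / d) = if n = 1 then 1 else 0)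
    (q m : ℕ) (hq : 1 ≤ q) (N : ℕ) (hN : 1 ≤ N) (hNm : N.Coprime m) :
    ∑ ℓ ∈ N.divisors,
      (if (∀ p : ℕ, p.Prime → p ∣ ℓ → p ∣ q) ∧ Nat.Coprime ℓ m then g ℓ * f (N / ℓ) else 0)
      = if N.Coprime q then f N else 0 := by
  set u := N.gcd (q ^ N) with hu
  have hN0 : N ≠ 0 := by omega
  have huN : u ∣ N := Nat.gcd_dvd_left _ _
  have hu0 : u ≠ 0 := by
    intro h; exact hN0 (Nat.eq_zero_of_gcd_eq_zero_left (hu ▸ h))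
  -- characterize condition
  have hchar : ∀ ℓ, ℓ ∣ N → ((∀ p : ℕ, p.Prime → p ∣ ℓ → p ∣ q) ↔ ℓ ∣ u) := by
    intro ℓ hℓ
    constructor
    · intro hP
      exact Nat.dvd_gcd hℓ (aux_dvd_pow N ℓ q hN hq hℓ hP)
    · intro hℓu p hp hpl
      have : p ∣ q ^ N := hpl.trans (hℓu.trans (Nat.gcd_dvd_right _ _))
      exact hp.dvd_of_dvd_pow this
  -- coprimality of u and N/u
  have hcop : Nat.Coprime (N / u) u := by
    by_contra hc
    obtain ⟨p, hp, hpv, hpu⟩ := Nat.Prime.not_coprime_iff_dvd.mp hc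
    have hup : u * p ∣ N := (Nat.dvd_div_iff_mul_dvd huN).mp hpv
    have hPup : ∀ r : ℕ, r.Prime → r ∣ u * p → r ∣ q := by
      intro r hr hrup
      rcases (Nat.Prime.dvd_mul hr).mp hrup with h | h
      · exact ((hchar u huN).mpr dvd_rfl) r hr h
      · have : r = p := (Nat.prime_dvd_prime_iff_eq hr hp).mp h
        subst this
        exact ((hchar u huN).mpr dvd_rfl) r hr hpu
    have hdu : u * p ∣ u := (hchar (u * p) hup).mp hPup
    have h1 : u * p ≤ u := Nat.le_of_dvd (by omega) hdu
    have h2 : u * 2 ≤ u * p := Nat.mul_le_mul_left u hp.two_le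
    omega
  -- restrict the sum to divisors of u
  have hstep1 : ∑ ℓ ∈ N.divisors,
      (if (∀ p : ℕ, p.Prime → p ∣ ℓ → p ∣ q) ∧ Nat.Coprime ℓ m then g ℓ * f (N / ℓ) else 0)
      = ∑ ℓ ∈ u.divisors, g ℓ * f (N / ℓ) := by
    rw [← Nat.divisors_filter_dvd_of_dvd hN0 huN, Finset.sum_filter]
    refine Finset.sum_congr rfl fun ℓ hℓ => ?_
    have hℓN : ℓ ∣ N := Nat.dvd_of_mem_divisors hℓ
    have hℓm : Nat.Coprime ℓ m := Nat.Coprime.coprime_dvd_left hℓN hNm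
    by_cases hd : ℓ ∣ u
    · rw [if_pos hd, if_pos ⟨(hchar ℓ hℓN).mpr hd, hℓm⟩]
    · rw [if_neg hd, if_neg (fun h => hd ((hchar ℓ hℓN).mp h.1))]
  rw [hstep1]
  have hu1 : 1 ≤ u := by omega
  have hstep2 : ∀ ℓ ∈ u.divisors, g ℓ * f (N / ℓ) = g ℓ * f (u / ℓ) * f (N / u) := by
    intro ℓ hℓ
    have hℓu : ℓ ∣ u := Nat.dvd_of_mem_divisors hℓ
    have hNl : N / ℓ = (u / ℓ) * (N / u) := by
      conv_lhs => rw [← Nat.div_mul_cancel huN]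
      rw [Nat.mul_div_assoc (N / u) hℓu, mul_comm]
    rw [hNl, hf_mult _ _ (Nat.Coprime.coprime_dvd_left (Nat.div_dvd_of_dvd hℓu) hcop.symm),
      mul_assoc]
  rw [Finset.sum_congr rfl hstep2, ← Finset.sum_mul, aux_flip f g hg u hu1]
  by_cases hNq : N.Coprime q
  · have huu : u = 1 := Nat.Coprime.gcd_eq_one (hNq.pow_right N)
    rw [if_pos hNq, if_pos huu, huu, Nat.div_one, one_mul]
  · have huu : u ≠ 1 := by
      intro h
      apply hNq
      have : Nat.Coprime N (q ^ N) := h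
      exact Nat.Coprime.coprime_dvd_right (dvd_pow_self q hN0) this
    rw [if_neg hNq, if_neg huu, zero_mul]

lemma aux_zmod (m a ℓ n : ℕ) (hm0 : m ≠ 0) (hℓ : Nat.Coprime ℓ m) :
    ((n : ZMod m) = (a : ZMod m) * ((ℓ : ZMod m))⁻¹) ↔
      (((ℓ * n : ℕ) : ZMod m) = (a : ZMod m)) := by
  haveI : NeZero m := ⟨hm0⟩
  have hunit : IsUnit ((ℓ : ZMod m)) := (ZMod.isUnit_iff_coprime ℓ m).mpr hℓ
  push_cast
  constructor
  · intro h
    rw [h]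
    calc (ℓ : ZMod m) * ((a : ZMod m) * ((ℓ : ZMod m))⁻¹)
        = (a : ZMod m) * ((ℓ : ZMod m) * ((ℓ : ZMod m))⁻¹) := by ring
      _ = (a : ZMod m) := by rw [ZMod.mul_inv_of_unit _ hunit, mul_one]
  · intro h
    rw [← h]
    calc (n : ZMod m) = (n : ZMod m) * ((ℓ : ZMod m) * ((ℓ : ZMod m))⁻¹) := by
          rw [ZMod.mul_inv_of_unit _ hunit, mul_one]
      _ = (ℓ : ZMod m) * (n : ZMod m) * ((ℓ : ZMod m))⁻¹ := by ring

lemma aux_swap (x : ℕ) (F : ℕ → ℕ → ℂ) :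
    ∑ ℓ ∈ Finset.Icc 1 x, ∑ n ∈ Finset.Icc 1 (x / ℓ), F ℓ n
      = ∑ N ∈ Finset.Icc 1 x, ∑ d ∈ N.divisors, F d (N / d) := by
  rw [Finset.sum_sigma', Finset.sum_sigma']
  refine Finset.sum_bij' (fun p _ => ⟨p.1 * p.2, p.1⟩) (fun p _ => ⟨p.2, p.1 / p.2⟩)
    ?_ ?_ ?_ ?_ ?_
  · rintro ⟨ℓ, n⟩ hp
    simp only [Finset.mem_sigma, Finset.mem_Icc] at hp ⊢
    obtain ⟨⟨h1, h2⟩, h3, h4⟩ := hp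
    rw [Nat.mem_divisors]
    have hle : ℓ * n ≤ x := by
      have := (Nat.le_div_iff_mul_le (by omega : 0 < ℓ)).mp h4
      nlinarith
    refine ⟨⟨by nlinarith, hle⟩, ⟨dvd_mul_right ℓ n, by positivity⟩⟩
  · rintro ⟨N, d⟩ hp
    simp only [Finset.mem_sigma, Finset.mem_Icc, Nat.mem_divisors] at hp ⊢
    obtain ⟨⟨h1, h2⟩, hd, hN0⟩ := hp
    have hd1 : 1 ≤ d := Nat.pos_of_dvd_of_pos hd (by omega)
    refine ⟨⟨hd1, le_trans (Nat.le_of_dvd (by omega) hd) h2⟩,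
      Nat.div_pos (Nat.le_of_dvd (by omega) hd) (by omega), Nat.div_le_div_right h2⟩
  · rintro ⟨ℓ, n⟩ hp
    simp only [Finset.mem_sigma, Finset.mem_Icc] at hp
    obtain ⟨⟨h1, h2⟩, h3, h4⟩ := hp
    simp [Nat.mul_div_cancel_left n (by omega : 0 < ℓ)]
  · rintro ⟨N, d⟩ hp
    simp only [Finset.mem_sigma, Finset.mem_Icc, Nat.mem_divisors] at hp
    obtain ⟨⟨h1, h2⟩, hd, hN0⟩ := hp
    simp [Nat.mul_div_cancel' hd]
  · rintro ⟨ℓ, n⟩ hp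
    simp only [Finset.mem_sigma, Finset.mem_Icc] at hp
    obtain ⟨⟨h1, h2⟩, h3, h4⟩ := hp
    simp [Nat.mul_div_cancel_left n (by omega : 0 < ℓ)]

/-- For a 1-bounded multiplicative `f` with convolution inverse `g`,
`m ∣ q`, `gcd(a,m)=1`: the sum of `f(n)` over `n ≤ x`, `n ≡ a (mod m)`, `gcd(n,q)=1`
equals `∑_{ℓ : p∣ℓ ⇒ p∣q, gcd(ℓ,m)=1} g(ℓ) ∑_{n ≤ x/ℓ, n ≡ aℓ⁻¹ (mod m)} f(n)`. -/
theorem stmt_8 (f g : ℕ → ℂ)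
    (hf1 : f 1 = 1)
    (hf_mult : ∀ a b : ℕ, Nat.Coprime a b → f (a * b) = f a * f b)
    (hf_bdd : ∀ n : ℕ, ‖f n‖ ≤ 1)
    (hg : ∀ n : ℕ, 1 ≤ n → ∑ d ∈ n.divisors, f d * g (n / d) = if n = 1 then 1 else 0)
    (q m a x : ℕ) (hq : 1 ≤ q) (hm : m ∣ q) (ha : Nat.Coprime a m) (hx : 1 ≤ x) :
    ∑ n ∈ Finset.Icc 1 x,
        (if (n : ZMod m) = (a : ZMod m) ∧ Nat.Coprime n q then f n else 0)
      = ∑' ℓ : ℕ,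
          if 1 ≤ ℓ ∧ (∀ p : ℕ, p.Prime → p ∣ ℓ → p ∣ q) ∧ Nat.Coprime ℓ m then
            g ℓ * ∑ n ∈ Finset.Icc 1 (x / ℓ),
              (if (n : ZMod m) = (a : ZMod m) * ((ℓ : ZMod m))⁻¹ then f n else 0)
          else 0 := by
  have hm0 : m ≠ 0 := by rintro rfl; rw [Nat.zero_dvd] at hm; omega
  -- Step A: tsum to finite sum
  have h0 : ∀ ℓ : ℕ, ℓ ∉ Finset.Icc 1 x →
      (if 1 ≤ ℓ ∧ (∀ p : ℕ, p.Prime → p ∣ ℓ → p ∣ q) ∧ Nat.Coprime ℓ m then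
        g ℓ * ∑ n ∈ Finset.Icc 1 (x / ℓ),
          (if (n : ZMod m) = (a : ZMod m) * ((ℓ : ZMod m))⁻¹ then f n else 0)
      else 0) = 0 := by
    intro ℓ hℓ
    rw [Finset.mem_Icc] at hℓ
    by_cases h1 : 1 ≤ ℓ
    · have hd0 : x / ℓ = 0 := Nat.div_eq_of_lt (by omega)
      rw [hd0]
      simp
    · rw [if_neg (by tauto)]
  rw [tsum_eq_sum h0]
  -- Step B: rewrite each ℓ-term as a double sum
  have hB : ∀ ℓ ∈ Finset.Icc 1 x,
      (if 1 ≤ ℓ ∧ (∀ p : ℕ, p.Prime → p ∣ ℓ → p ∣ q) ∧ Nat.Coprime ℓ m then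
        g ℓ * ∑ n ∈ Finset.Icc 1 (x / ℓ),
          (if (n : ZMod m) = (a : ZMod m) * ((ℓ : ZMod m))⁻¹ then f n else 0)
      else 0)
      = ∑ n ∈ Finset.Icc 1 (x / ℓ),
          (if ((∀ p : ℕ, p.Prime → p ∣ ℓ → p ∣ q) ∧ Nat.Coprime ℓ m) ∧
              ((ℓ * n : ℕ) : ZMod m) = (a : ZMod m) then g ℓ * f n else 0) := by
    intro ℓ hℓ
    rw [Finset.mem_Icc] at hℓ
    by_cases hc : (∀ p : ℕ, p.Prime → p ∣ ℓ → p ∣ q) ∧ Nat.Coprime ℓ m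
    · rw [if_pos ⟨hℓ.1, hc⟩, Finset.mul_sum]
      refine Finset.sum_congr rfl fun n _ => ?_
      rw [mul_ite, mul_zero]
      exact if_congr ((aux_zmod m a ℓ n hm0 hc.2).trans (and_iff_right hc).symm) rfl rfl
    · rw [if_neg (by tauto)]
      symm
      exact Finset.sum_eq_zero fun n _ => if_neg (by tauto)
  rw [Finset.sum_congr rfl hB, aux_swap]
  -- Step C: pointwise identity for each N
  refine Finset.sum_congr rfl fun N hN => ?_
  rw [Finset.mem_Icc] at hN
  have hrw : ∀ d ∈ N.divisors,
      (if ((∀ p : ℕ, p.Prime → p ∣ d → p ∣ q) ∧ Nat.Coprime d m) ∧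
          ((d * (N / d) : ℕ) : ZMod m) = (a : ZMod m) then g d * f (N / d) else 0)
      = (if ((∀ p : ℕ, p.Prime → p ∣ d → p ∣ q) ∧ Nat.Coprime d m) ∧
          ((N : ℕ) : ZMod m) = (a : ZMod m) then g d * f (N / d) else 0) := by
    intro d hd
    rw [Nat.mul_div_cancel' (Nat.dvd_of_mem_divisors hd)]
  rw [Finset.sum_congr rfl hrw]
  by_cases hNa : ((N : ℕ) : ZMod m) = (a : ZMod m)
  · have hNm : N.Coprime m := by
      haveI : NeZero m := ⟨hm0⟩
      exact (ZMod.isUnit_iff_coprime N m).mp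
        (hNa ▸ ((ZMod.isUnit_iff_coprime a m).mpr ha))
    have := aux_key f g hf_mult hg q m hq N hN.1 hNm
    calc (if ((N : ℕ) : ZMod m) = (a : ZMod m) ∧ Nat.Coprime N q then f N else 0)
        = (if Nat.Coprime N q then f N else 0) := by simp [hNa]
      _ = ∑ ℓ ∈ N.divisors,
          (if (∀ p : ℕ, p.Prime → p ∣ ℓ → p ∣ q) ∧ Nat.Coprime ℓ m
            then g ℓ * f (N / ℓ) else 0) := this.symm
      _ = _ := Finset.sum_congr rfl fun d _ => by
            rw [if_congr (and_iff_left hNa).symm rfl rfl]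
  · rw [if_neg (by tauto)]
    symm
    exact Finset.sum_eq_zero fun d _ => if_neg (by tauto)
end

section
/- Let f ∈ 𝒞 be a multiplicative function (|Λ_f(n)| ≤ Λ(n) for all n where −F'/F = ∑ Λ_f(n) n^{−s}), and let g be its Dirichlet convolution inverse. Then |f(n)| ≤ 1 and |g(n)| ≤ 1 for all n ≥ 1. -/
/-!
Differentiating `F(s) = ∑ f(n) n^{-s}` amounts to multiplying `f` pointwise by `log`, which is a
derivation of Dirichlet convolution. Hence `f log = Λ_f * f`, and differentiating `F G = 1`
gives `g log = -Λ_f * g`. Since `∑_{d ∣ n} Λ(d) = log n`, strong induction on `n` turns either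
recursion with `|Λ_f| ≤ Λ` into `|f(n)| ≤ 1`, resp. `|g(n)| ≤ 1`.
-/

open ArithmeticFunction Finset

namespace ArithmeticFunction

variable {R : Type*}

def ofFun [Zero R] (f : ℕ → R) : ArithmeticFunction R :=
  ⟨fun n => if n = 0 then 0 else f n, if_pos rfl⟩

theorem ofFun_apply [Zero R] (f : ℕ → R) {n : ℕ} (hn : n ≠ 0) : ofFun f n = f n := if_neg hn

theorem ofFun_mul_ofFun_apply [Semiring R] (f g : ℕ → R) (n : ℕ) :
    (ofFun f * ofFun g) n = ∑ d ∈ n.divisors, f d * g (n / d) := by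
  rw [mul_apply, Nat.sum_divisorsAntidiagonal (fun d m => ofFun f d * ofFun g m)]
  refine sum_congr rfl fun d hd => ?_
  have hd0 : d ≠ 0 := Nat.ne_of_gt (Nat.pos_of_mem_divisors hd)
  have hnd0 : n / d ≠ 0 :=
    Nat.div_ne_zero_iff.mpr ⟨hd0, Nat.divisor_le hd⟩
  rw [ofFun_apply f hd0, ofFun_apply g hnd0]

theorem mul_pmul_of_additive [CommSemiring R] (D F G : ArithmeticFunction R)
    (hD : ∀ m n : ℕ, m ≠ 0 → n ≠ 0 → D (m * n) = D m + D n) :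
    (F * G).pmul D = F.pmul D * G + F * G.pmul D := by
  ext n
  rcases eq_or_ne n 0 with rfl | hn
  · simp
  simp only [pmul_apply, mul_apply, add_apply, sum_mul, ← sum_add_distrib]
  refine sum_congr rfl fun x hx => ?_
  obtain ⟨rfl, -⟩ := Nat.mem_divisorsAntidiagonal.mp hx
  rw [hD _ _ (left_ne_zero_of_mul hn) (right_ne_zero_of_mul hn)]
  ring

theorem pmul_eq_neg_mul_of_mul_eq_one [CommRing R] (D F G L : ArithmeticFunction R)
    (hD : ∀ m n : ℕ, m ≠ 0 → n ≠ 0 → D (m * n) = D m + D n)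
    (hFG : F * G = 1) (hF : F.pmul D = L * F) :
    G.pmul D = -(L * G) := by
  have hD1 : D 1 = 0 := by simpa using hD 1 1 one_ne_zero one_ne_zero
  have hone : (1 : ArithmeticFunction R).pmul D = 0 := by
    ext n
    rcases eq_or_ne n 1 with rfl | hn
    · simp [pmul_apply, hD1]
    · simp [pmul_apply, one_apply_ne hn]
  have hleibniz := mul_pmul_of_additive D F G hD
  rw [hFG, hone, hF] at hleibniz
  linear_combination (-G) * hleibniz - (G.pmul D + L * G) * hFG

noncomputable def logC : ArithmeticFunction ℂ := ⟨fun n => (Real.log n : ℂ), by simp⟩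

theorem logC_apply (n : ℕ) : logC n = (Real.log n : ℂ) := rfl

theorem logC_mul {m n : ℕ} (hm : m ≠ 0) (hn : n ≠ 0) : logC (m * n) = logC m + logC n := by
  simp only [logC_apply, Nat.cast_mul]
  rw [Real.log_mul (Nat.cast_ne_zero.mpr hm) (Nat.cast_ne_zero.mpr hn), Complex.ofReal_add]

theorem norm_le_one_of_pmul_logC_eq_mul (P W : ArithmeticFunction ℂ) (hP1 : P 1 = 1)
    (hrec : P.pmul logC = W * P) (hW : ∀ n, ‖W n‖ ≤ Λ n) (n : ℕ) : ‖P n‖ ≤ 1 := by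
  induction n using Nat.strong_induction_on with
  | _ n ih =>
  rcases lt_trichotomy n 1 with hn | rfl | hn
  · simp [Nat.lt_one_iff.mp hn]
  · simp [hP1]
  have hlog : 0 < Real.log n := Real.log_pos (by exact_mod_cast hn)
  have hW1 : W 1 = 0 := norm_le_zero_iff.mp (by simpa using hW 1)
  -- `W 1 = 0` keeps `P n` itself out of the right-hand side of the recursion.
  have hterm : ∀ x ∈ n.divisorsAntidiagonal, ‖W x.1 * P x.2‖ ≤ Λ x.1 := by
    intro x hx
    obtain ⟨hmul, hn0⟩ := Nat.mem_divisorsAntidiagonal.mp hx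
    rcases eq_or_ne x.1 1 with h1 | h1
    · simp [h1, hW1]
    have hx2 : x.2 < n := by
      rw [← hmul]
      refine lt_mul_left (Nat.pos_of_ne_zero (right_ne_zero_of_mul (hmul ▸ hn0))) ?_
      have := left_ne_zero_of_mul (hmul ▸ hn0)
      omega
    rw [norm_mul]
    simpa using mul_le_mul (hW x.1) (ih x.2 hx2) (norm_nonneg _) vonMangoldt_nonneg
  have hmain : ‖P n‖ * Real.log n ≤ Real.log n :=
    calc ‖P n‖ * Real.log n = ‖(P.pmul logC) n‖ := by
          rw [pmul_apply, logC_apply, norm_mul, Complex.norm_real, Real.norm_of_nonneg hlog.le]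
      _ = ‖∑ x ∈ n.divisorsAntidiagonal, W x.1 * P x.2‖ := by rw [hrec, mul_apply]
      _ ≤ ∑ x ∈ n.divisorsAntidiagonal, Λ x.1 := norm_sum_le_of_le _ hterm
      _ = Real.log n := by
          rw [Nat.sum_divisorsAntidiagonal (fun d _ => Λ d), vonMangoldt_sum]
  exact le_of_mul_le_mul_right (by simpa using hmain) hlog

end ArithmeticFunction

theorem stmt_19_general (f g Λf : ℕ → ℂ)
    (hf1 : f 1 = 1) (hg1 : g 1 = 1)
    (hrec : ∀ n : ℕ, 1 ≤ n →
      f n * (Real.log n : ℂ) = ∑ d ∈ n.divisors, Λf d * f (n / d))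
    (hΛ : ∀ n : ℕ, ‖Λf n‖ ≤ ArithmeticFunction.vonMangoldt n)
    (hg : ∀ n : ℕ, 1 ≤ n → ∑ d ∈ n.divisors, f d * g (n / d) = if n = 1 then 1 else 0) :
    ∀ n : ℕ, 1 ≤ n → ‖f n‖ ≤ 1 ∧ ‖g n‖ ≤ 1 := by
  have hFG : ofFun f * ofFun g = 1 := by
    ext n
    rcases eq_or_ne n 0 with rfl | hn
    · simp
    rw [ofFun_mul_ofFun_apply f g n, hg n (Nat.one_le_iff_ne_zero.mpr hn), one_apply]
  have hF : (ofFun f).pmul logC = ofFun Λf * ofFun f := by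
    ext n
    rcases eq_or_ne n 0 with rfl | hn
    · simp
    rw [pmul_apply, ofFun_apply f hn, logC_apply, ofFun_mul_ofFun_apply Λf f n,
      hrec n (Nat.one_le_iff_ne_zero.mpr hn)]
  have hG := pmul_eq_neg_mul_of_mul_eq_one logC _ _ _ (fun _ _ => logC_mul) hFG hF
  rw [← neg_mul] at hG
  have hL : ∀ n, ‖ofFun Λf n‖ ≤ Λ n := fun n => by
    rcases eq_or_ne n 0 with rfl | hn
    · simp
    · exact ofFun_apply Λf hn ▸ hΛ n
  intro n hn
  have hn0 : n ≠ 0 := Nat.one_le_iff_ne_zero.mp hn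
  rw [← ofFun_apply f hn0, ← ofFun_apply g hn0]
  exact ⟨norm_le_one_of_pmul_logC_eq_mul _ _ (by simp [ofFun_apply, hf1]) hF hL n,
    norm_le_one_of_pmul_logC_eq_mul _ _ (by simp [ofFun_apply, hg1]) hG
      (fun n => by simpa using hL n) n⟩

/-- If `f` is multiplicative with `f(1) = 1`, satisfies the recursion
`f(n) log n = ∑_{d ∣ n} Λ_f(d) f(n/d)` with `|Λ_f(n)| ≤ Λ(n)`, and `g` is the Dirichlet
convolution inverse of `f`, then `|f(n)| ≤ 1` and `|g(n)| ≤ 1` for all `n ≥ 1`. -/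
theorem stmt_19 (f g Λf : ℕ → ℂ)
    (hf1 : f 1 = 1) (hg1 : g 1 = 1)
    (hf_mult : ∀ a b : ℕ, Nat.Coprime a b → f (a * b) = f a * f b)
    (hrec : ∀ n : ℕ, 1 ≤ n →
      f n * (Real.log n : ℂ) = ∑ d ∈ n.divisors, Λf d * f (n / d))
    (hΛ : ∀ n : ℕ, ‖Λf n‖ ≤ ArithmeticFunction.vonMangoldt n)
    (hg : ∀ n : ℕ, 1 ≤ n → ∑ d ∈ n.divisors, f d * g (n / d) = if n = 1 then 1 else 0) :
    ∀ n : ℕ, 1 ≤ n → ‖f n‖ ≤ 1 ∧ ‖g n‖ ≤ 1 :=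
  stmt_19_general f g Λf hf1 hg1 hrec hΛ hg
end
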